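/- The bracket on vector densities of weights μ, ν ≠ 1, defined by [𝔛,𝔜] := [L_𝔛, L_𝔜] restricted back to functions (where L_𝔛 is the divergence-free lift), is given explicitly by [𝔛,𝔜]^b = (𝔛^a ∂_a − (ν/(μ−1))∂_a𝔛^a)𝔜^b − (𝔜^a ∂_a − (μ/(ν−1))∂_a𝔜^a)𝔛^b, and has weight μ+ν. -/

import Mathlib

/-! The lift of a weight-μ vector density maps `f t^λ` to `t^(μ+λ)` times
`𝔛^a ∂_a f − (λ/(μ−1)) (∂_a 𝔛^a) f`. On a function (λ = 0) the inner lift is just the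
vector field, so the outer lift sees weight ν (resp. μ): this produces the divergence
coefficients ν/(μ−1) and μ/(ν−1). The second-order terms of the two composites cancel
because the `∂_a` commute, leaving the coordinate Lie bracket of `𝔛^a ∂_a` and `𝔜^a ∂_a`. -/

noncomputable section

/- Model: densities are `AddMonoidAlgebra R ℝ` over a commutative ℝ-algebra `R`
(modeling `C^∞(ℝ^n)`), with commuting derivations `D a = ∂/∂x^a`;
`AddMonoidAlgebra.single λ f` models `f(x) t^λ`.  A vector density of weight μ
is `𝔛 = t^μ 𝔛^a ∂_a`, with divergence-free lift
`L_𝔛 = t^μ(𝔛^a ∂_a − (μ−1)⁻¹ ∂_a𝔛^a · t∂_t)`. -/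

variable {R : Type*} [CommRing R] [Algebra ℝ R]

def wop (ψ : AddMonoidAlgebra R ℝ) : AddMonoidAlgebra R ℝ :=
  AddMonoidAlgebra.ofCoeff (Finsupp.sum ψ.coeff fun l c => Finsupp.single l (l • c))

def paD {n : ℕ} (D : Fin n → Derivation ℝ R R) (a : Fin n)
    (ψ : AddMonoidAlgebra R ℝ) : AddMonoidAlgebra R ℝ :=
  AddMonoidAlgebra.ofCoeff (Finsupp.mapRange (D a) (map_zero _) ψ.coeff)

/-- The divergence-free lift (generalized Lie derivative) of the weight-μ
vector density `t^μ Xa^a ∂_a`. -/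
def Llift {n : ℕ} (D : Fin n → Derivation ℝ R R) (μ : ℝ) (Xa : Fin n → R)
    (ψ : AddMonoidAlgebra R ℝ) : AddMonoidAlgebra R ℝ :=
  (∑ a, AddMonoidAlgebra.single μ (Xa a) * paD D a ψ)
    - (μ - 1)⁻¹ • (AddMonoidAlgebra.single μ (∑ a, D a (Xa a)) * wop ψ)

section

open AddMonoidAlgebra

lemma wop_single (l : ℝ) (c : R) : wop (single l c) = single l (l • c) := by
  classical
  rw [wop, coeff_single, Finsupp.sum_single_index (by simp), ofCoeff_single]

variable {n : ℕ} (D : Fin n → Derivation ℝ R R)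

lemma paD_single (a : Fin n) (l : ℝ) (c : R) : paD D a (single l c) = single l (D a c) := by
  simp [paD, coeff_single, ofCoeff_single]

lemma Llift_single (μ : ℝ) (X : Fin n → R) (l : ℝ) (c : R) :
    Llift D μ X (single l c) =
      single (μ + l) ((∑ a, X a * D a c) - ((μ - 1)⁻¹ * l) • ((∑ a, D a (X a)) * c)) := by
  simp only [Llift, wop_single, paD_single, single_mul_single, smul_single, single_sub,
    mul_smul, mul_smul_comm]
  congr 1
  exact (map_sum (singleAddHom (μ + l)) _ _).symm

lemma Llift_single_zero (μ : ℝ) (X : Fin n → R) (f : R) :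
    Llift D μ X (single 0 f) = single μ (∑ a, X a * D a f) := by
  simp [Llift_single]

end

namespace Derivation

variable {ι S : Type*} [Fintype ι] [CommSemiring S]

lemma sum_mul_apply_sum_mul {A : Type*} [CommSemiring A] [Algebra S A]
    (D : ι → Derivation S A A) (X Y : ι → A) (f : A) :
    ∑ a, X a * D a (∑ b, Y b * D b f) =
      ∑ b, (∑ a, X a * D a (Y b)) * D b f + ∑ a, ∑ b, X a * Y b * D a (D b f) := by
  simp only [map_sum, leibniz, smul_eq_mul, mul_add, Finset.mul_sum, Finset.sum_add_distrib,
    Finset.sum_mul]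
  rw [add_comm, Finset.sum_comm (γ := ι)]
  congr 1 <;> refine Finset.sum_congr rfl fun _ _ => Finset.sum_congr rfl fun _ _ => by ring

lemma sum_mul_apply_sum_mul_sub_swap {A : Type*} [CommRing A] [Algebra S A]
    (D : ι → Derivation S A A) (hD : ∀ a b f, D a (D b f) = D b (D a f))
    (X Y : ι → A) (f : A) :
    ∑ a, X a * D a (∑ b, Y b * D b f) - ∑ a, Y a * D a (∑ b, X b * D b f) =
      ∑ b, (∑ a, X a * D a (Y b) - ∑ a, Y a * D a (X b)) * D b f := by
  have second_order_symm :
      ∑ a, ∑ b, X a * Y b * D a (D b f) = ∑ a, ∑ b, Y a * X b * D a (D b f) := by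
    rw [Finset.sum_comm]
    exact Finset.sum_congr rfl fun a _ => Finset.sum_congr rfl fun b _ => by rw [hD]; ring
  rw [sum_mul_apply_sum_mul, sum_mul_apply_sum_mul, second_order_symm]
  simp only [sub_mul, Finset.sum_sub_distrib]
  abel

end Derivation

theorem bracket_of_vector_densities_general
    {n : ℕ} (D : Fin n → Derivation ℝ R R)
    (hD : ∀ a b (f : R), D a (D b f) = D b (D a f))
    (μ ν : ℝ) (Xa Ya : Fin n → R) :
    ∀ f : R,
      Llift D μ Xa (Llift D ν Ya (AddMonoidAlgebra.single 0 f))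
        - Llift D ν Ya (Llift D μ Xa (AddMonoidAlgebra.single 0 f))
      = AddMonoidAlgebra.single (μ + ν) (∑ b,
          (((∑ a, Xa a * D a (Ya b)) - (ν * (μ - 1)⁻¹) • ((∑ a, D a (Xa a)) * Ya b))
            - ((∑ a, Ya a * D a (Xa b)) - (μ * (ν - 1)⁻¹) • ((∑ a, D a (Ya a)) * Xa b)))
          * D b f) := by
  intro f
  have smul_mul_sum (c : ℝ) (S : R) (Z : Fin n → R) :
      c • (S * ∑ b, Z b * D b f) = ∑ b, c • (S * Z b) * D b f := by
    simp only [Finset.mul_sum, Finset.smul_sum, smul_mul_assoc, mul_assoc]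
  rw [Llift_single_zero, Llift_single_zero, Llift_single, Llift_single, add_comm ν μ,
    ← AddMonoidAlgebra.single_sub]
  congr 1
  rw [sub_sub_sub_comm, Derivation.sum_mul_apply_sum_mul_sub_swap D hD, smul_mul_sum,
    smul_mul_sum, mul_comm (μ - 1)⁻¹ ν, mul_comm (ν - 1)⁻¹ μ]
  simp only [sub_mul, Finset.sum_sub_distrib]
  abel

theorem bracket_of_vector_densities
    {n : ℕ} (D : Fin n → Derivation ℝ R R)
    (hD : ∀ a b (f : R), D a (D b f) = D b (D a f))
    (μ ν : ℝ) (hμ : μ ≠ 1) (hν : ν ≠ 1) (Xa Ya : Fin n → R) :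
    ∀ f : R,
      Llift D μ Xa (Llift D ν Ya (AddMonoidAlgebra.single 0 f))
        - Llift D ν Ya (Llift D μ Xa (AddMonoidAlgebra.single 0 f))
      = AddMonoidAlgebra.single (μ + ν) (∑ b,
          (((∑ a, Xa a * D a (Ya b)) - (ν * (μ - 1)⁻¹) • ((∑ a, D a (Xa a)) * Ya b))
            - ((∑ a, Ya a * D a (Xa b)) - (μ * (ν - 1)⁻¹) • ((∑ a, D a (Ya a)) * Xa b)))
          * D b f) :=
  bracket_of_vector_densities_general D hD μ ν Xa Ya

end
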